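/- arXiv:1011.0982 — 8 statements merged into one kernel-verified Lean document; each statement's English description precedes it below -/
import Mathlib

section
/- Let (Q,·,\,1) be a left Bol loop, i.e., a loop satisfying x·(y·(x·z)) = (x·(y·x))·z for all x,y,z, in which the squaring map x ↦ x·x is a bijection. Then Z(Q) = C(Q) ∩ N_ρ(Q): an element a belongs to the center (i.e., a lies in all three nuclei and in the commutant) if and only if a·x = x·a for all x and (x·y)·a = x·(y·a) for all x,y. -/
/-- **Lemma 3.2.** In a uniquely 2-divisible (left) Bol loop,
`Z(Q) = C(Q) ∩ N_ρ(Q)`: an element is central (lies in all three nuclei and the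
commutant) iff it commutes with everything and lies in the right nucleus. -/
theorem bol_loop_center_eq_commutant_inter_rightNucleus
    (Q : Type) (mul ld : Q → Q → Q) (one : Q)
    (hld1 : ∀ x y : Q, ld x (mul x y) = y)
    (hld2 : ∀ x y : Q, mul x (ld x y) = y)
    (hone1 : ∀ x : Q, mul one x = x)
    (hone2 : ∀ x : Q, mul x one = x)
    (hrbij : ∀ a : Q, Function.Bijective (fun x : Q => mul x a))
    (hbol : ∀ x y z : Q, mul x (mul y (mul x z)) = mul (mul x (mul y x)) z)
    (hsq : Function.Bijective (fun x : Q => mul x x))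
    (a : Q) :
    ((∀ x y : Q, mul (mul a x) y = mul a (mul x y)) ∧
     (∀ x y : Q, mul (mul x a) y = mul x (mul a y)) ∧
     (∀ x y : Q, mul (mul x y) a = mul x (mul y a)) ∧
     (∀ x : Q, mul a x = mul x a)) ↔
    ((∀ x : Q, mul a x = mul x a) ∧ (∀ x y : Q, mul (mul x y) a = mul x (mul y a))) := by
  constructor
  · rintro ⟨_, _, h3, h4⟩; exact ⟨h4, h3⟩
  · rintro ⟨hc, hr⟩
    have alt : ∀ x z : Q, mul x (mul x z) = mul (mul x x) z := by
      intro x z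
      have := hbol x one z
      simpa [hone1] using this
    have key : ∀ x z : Q, mul (mul (mul x x) z) a = mul (mul a (mul x x)) z := by
      intro x z
      calc mul (mul (mul x x) z) a
          = mul (mul x x) (mul z a) := hr _ _
        _ = mul x (mul x (mul z a)) := (alt _ _).symm
        _ = mul x (mul (mul x z) a) := by rw [← hr]
        _ = mul x (mul a (mul x z)) := by rw [← hc]
        _ = mul (mul x (mul a x)) z := hbol x a z
        _ = mul (mul x (mul x a)) z := by rw [hc]
        _ = mul (mul (mul x x) a) z := by rw [alt]
        _ = mul (mul a (mul x x)) z := by rw [← hc]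
    have key' : ∀ w z : Q, mul (mul w z) a = mul (mul a w) z := by
      intro w z
      obtain ⟨x, hx⟩ := hsq.2 w
      simp only at hx
      rw [← hx]
      exact key x z
    have hlam : ∀ x y : Q, mul (mul a x) y = mul a (mul x y) := by
      intro x y
      rw [← key', hc]
    have hmu : ∀ x y : Q, mul (mul x a) y = mul x (mul a y) := by
      intro x y
      rw [← hc, hlam, hc, hr, ← hc]
    exact ⟨hlam, hmu, hr, hc⟩
end

section
/- Let (Q,·,\,1) be a uniquely 2-divisible commutative automorphic loop with associated Bruck loop operation x∘y := √(P_x(y·y)). For a ∈ Q the following are equivalent: (1) a∘(x∘y) = x∘(a∘y) for all x,y ∈ Q (i.e., a lies in the center of the associated Bruck loop (Q,∘)); (2) P_a(P_x(y)) = P_x(P_a(y)) for all x,y ∈ Q. -/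
/-- **Lemma 3.3 (center characterization).** Let `(Q,·,\,1)` be a uniquely
2-divisible commutative automorphic loop with associated Bruck loop operation
`x ∘ y := √(P_x(y·y))`, where `x⁻¹ := x \ 1`, `P_x(y) := x⁻¹ \ (x·y)` and `√` is
the inverse of the squaring bijection. Then `a` is central in `(Q,∘)`
(i.e. `a∘(x∘y) = x∘(a∘y)` for all `x,y`) iff `P_a` commutes with every `P_x`. -/
theorem bruck_center_iff_P_commutes
    (Q : Type) (mul ld : Q → Q → Q) (one : Q)
    (hld1 : ∀ x y : Q, ld x (mul x y) = y)
    (hld2 : ∀ x y : Q, mul x (ld x y) = y)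
    (hone1 : ∀ x : Q, mul one x = x)
    (hone2 : ∀ x : Q, mul x one = x)
    (hcomm : ∀ x y : Q, mul x y = mul y x)
    (hauto : ∀ x y u v : Q,
      ld (mul y x) (mul y (mul x (mul u v))) =
        mul (ld (mul y x) (mul y (mul x u))) (ld (mul y x) (mul y (mul x v))))
    (sqrt : Q → Q)
    (hsqrt1 : ∀ x : Q, mul (sqrt x) (sqrt x) = x)
    (hsqrt2 : ∀ x : Q, sqrt (mul x x) = x)
    (op : Q → Q → Q)
    (hop : ∀ x y : Q, op x y = sqrt (ld (ld x one) (mul x (mul y y))))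
    (a : Q) :
    (∀ x y : Q, op a (op x y) = op x (op a y)) ↔
    (∀ x y : Q, ld (ld a one) (mul a (ld (ld x one) (mul x y))) =
      ld (ld x one) (mul x (ld (ld a one) (mul a y)))) := by
  have key : ∀ x y : Q, op a (op x y) =
      sqrt (ld (ld a one) (mul a (ld (ld x one) (mul x (mul y y))))) := by
    intro x y
    rw [hop a (op x y), hop x y, hsqrt1]
  have key2 : ∀ x y : Q, op x (op a y) =
      sqrt (ld (ld x one) (mul x (ld (ld a one) (mul a (mul y y))))) := by
    intro x y
    rw [hop x (op a y), hop a y, hsqrt1]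
  have sinj : ∀ u v : Q, sqrt u = sqrt v → u = v := by
    intro u v h
    have := congrArg (fun z => mul z z) h
    simpa [hsqrt1] using this
  constructor
  · intro h x y
    have h' := h x (sqrt y)
    rw [key, key2, hsqrt1] at h'
    exact sinj _ _ h'
  · intro h x y
    rw [key, key2, h]
end

section
/- Let p ≥ 5 be a prime. Then there exist a, b, c ∈ ZMod p such that a is a quadratic nonresidue, b and c are quadratic residues, b − a is a quadratic residue, and c − a is a quadratic nonresidue. -/
/-- **Lemma 5.3.** For every prime `p ≥ 5` there exist a quadratic nonresidue `a`
and quadratic residues `b`, `c` in `ZMod p` such that `b − a` is a quadratic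
residue and `c − a` is a quadratic nonresidue. -/
theorem exists_nonresidue_and_residues_with_shifts
    (p : ℕ) (hp : p.Prime) (hp5 : 5 ≤ p) :
    ∃ a b c : ZMod p,
      (a ≠ 0 ∧ ¬∃ y : ZMod p, a = y * y) ∧
      (b ≠ 0 ∧ ∃ y : ZMod p, b = y * y) ∧
      (c ≠ 0 ∧ ∃ y : ZMod p, c = y * y) ∧
      (b - a ≠ 0 ∧ ∃ y : ZMod p, b - a = y * y) ∧
      (c - a ≠ 0 ∧ ¬∃ y : ZMod p, c - a = y * y) := by
  haveI : Fact p.Prime := ⟨hp⟩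
  have hchar : ringChar (ZMod p) ≠ 2 := by
    rw [ZMod.ringChar_zmod_n]; omega
  have hdvd : ∀ n : ℕ, 0 < n → n < 5 → (n : ZMod p) ≠ 0 := by
    intro n hn hn5 h
    have := (ZMod.natCast_eq_zero_iff n p).mp h
    have := Nat.le_of_dvd hn this
    omega
  have h2 : (2 : ZMod p) ≠ 0 := by
    have := hdvd 2 (by norm_num) (by norm_num); exact_mod_cast this
  -- the nonresidue a
  obtain ⟨a, ha⟩ := FiniteField.exists_nonsquare hchar
  have ha0 : a ≠ 0 := by rintro rfl; exact ha ⟨0, by ring⟩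
  have hasq : ¬∃ y : ZMod p, a = y * y := by
    rintro ⟨y, hy⟩; exact ha ⟨y, hy⟩
  -- find u with u ≠ 0 and u*u ≠ -a
  have hu : ∃ u : ZMod p, u ≠ 0 ∧ u * u ≠ -a := by
    by_contra h
    push_neg at h
    have h1 := h 1 one_ne_zero
    have h2' := h 2 h2
    have h3 : (3 : ZMod p) = 0 := by linear_combination h2' - h1
    have := hdvd 3 (by norm_num) (by norm_num)
    exact this (by exact_mod_cast h3)
  obtain ⟨u, hu0, huna⟩ := hu
  have huua : u * u ≠ a := fun h => hasq ⟨u, h.symm⟩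
  set x : ZMod p := (u + a * u⁻¹) * (2 : ZMod p)⁻¹ with hxdef
  set y : ZMod p := (a * u⁻¹ - u) * (2 : ZMod p)⁻¹ with hydef
  have hxy : x * x - y * y = a := by
    rw [hxdef, hydef]; field_simp
    ring
  have hx0 : x ≠ 0 := by
    intro hx
    apply huna
    have h1 : u + a * u⁻¹ = 0 := by
      rcases mul_eq_zero.mp hx with h | h
      · exact h
      · exact absurd (inv_eq_zero.mp h) h2
    have h2'' : u * u + a = 0 := by
      have := congrArg (· * u) h1
      simpa [add_mul, mul_assoc, inv_mul_cancel₀ hu0] using this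
    linear_combination h2''
  have hy0 : y ≠ 0 := by
    intro hy
    apply huua
    have h1 : a * u⁻¹ - u = 0 := by
      rcases mul_eq_zero.mp hy with h | h
      · exact h
      · exact absurd (inv_eq_zero.mp h) h2
    have h2'' : a - u * u = 0 := by
      have := congrArg (· * u) h1
      simpa [sub_mul, mul_assoc, inv_mul_cancel₀ hu0] using this
    linear_combination -h2''
  clear_value x y
  -- find c
  have hc : ∃ c : ZMod p, c ≠ 0 ∧ (∃ y : ZMod p, c = y * y) ∧
      ¬∃ z : ZMod p, c - a = z * z := by
    by_contra h
    push_neg at h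
    -- then 1 - n*a is a nonzero square for all n
    have key : ∀ n : ℕ, (1 - (n : ZMod p) * a ≠ 0 ∧ ∃ y : ZMod p, 1 - (n : ZMod p) * a = y * y) := by
      intro n
      induction n with
      | zero => exact ⟨by simp, 1, by norm_num⟩
      | succ n ih =>
        obtain ⟨hne, w, hw⟩ := ih
        have hca : 1 - (n : ZMod p) * a - a ≠ 0 := by
          intro hz
          apply hasq
          exact ⟨w, by linear_combination hw - hz⟩
        obtain ⟨z, hz⟩ := h (1 - (n : ZMod p) * a) hne ⟨w, hw⟩
        refine ⟨?_, z, ?_⟩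
        · push_cast
          intro h0
          exact hca (by linear_combination h0)
        · push_cast
          linear_combination hz
    obtain ⟨hne, -⟩ := key (a⁻¹).val
    apply hne
    rw [ZMod.natCast_val, ZMod.cast_id, inv_mul_cancel₀ ha0, sub_self]
  obtain ⟨c, hc0, hcsq, hcna⟩ := hc
  refine ⟨a, x * x, c, ⟨ha0, hasq⟩, ⟨mul_ne_zero hx0 hx0, x, rfl⟩, ⟨hc0, hcsq⟩,
    ⟨?_, y, by linear_combination hxy⟩, ?_, hcna⟩
  · rw [← hxy]; intro h0
    exact hy0 (by
      have : y * y = 0 := by linear_combination h0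
      rcases mul_eq_zero.mp this with h | h <;> exact h)
  · intro h0
    apply hcna
    exact ⟨0, by rw [h0]; ring⟩
end

section
/- Let p be a prime and F = ZMod p. Say A ∈ M(2,F) is anisotropic if det(A − λ·I) ≠ 0 for all λ ∈ F (note this forces A to be invertible). Then: (i) there exists an anisotropic A with trace(A) = 0 if and only if p ≠ 2; (ii) there exists an anisotropic A with trace(A) ≠ 0 and det(A) a quadratic residue if and only if p ≠ 3; (iii) there exists an anisotropic A with trace(A) ≠ 0 and det(A) a quadratic nonresidue if and only if p ≠ 2. -/
private lemma det_sub_smul_one' {F : Type*} [CommRing F] (A : Matrix (Fin 2) (Fin 2) F) (l : F) :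
    (A - l • (1 : Matrix (Fin 2) (Fin 2) F)).det = l*l - A.trace*l + A.det := by
  simp [Matrix.det_fin_two, Matrix.trace_fin_two, Matrix.sub_apply, Matrix.smul_apply,
    Matrix.one_apply]
  ring

private lemma nonsq_shift {F : Type*} [Field F] {u c x : F} (hc : c ≠ 0) (hu : ¬IsSquare u)
    (hx : x = c*c*u) : ¬IsSquare x := by
  rintro ⟨r, hr⟩
  rw [hx] at hr
  exact hu ⟨r/c, by field_simp at hr ⊢; linear_combination hr⟩

private lemma builder {p : ℕ} [Fact p.Prime] (t d : ZMod p) (hdisc : ¬IsSquare (t*t - 4*d)) :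
    ∃ A : Matrix (Fin 2) (Fin 2) (ZMod p),
      (∀ l : ZMod p, (A - l • (1 : Matrix (Fin 2) (Fin 2) (ZMod p))).det ≠ 0) ∧
      A.trace = t ∧ A.det = d := by
  have htr : (Matrix.of !![0,-d;1,t]).trace = t := by simp [Matrix.trace_fin_two]; exact zero_add t
  have hdet : (Matrix.of !![0,-d;1,t]).det = d := by simp [Matrix.det_fin_two]; exact (by ring : (0:ZMod p)*t - -d*1 = d)
  refine ⟨Matrix.of !![0,-d;1,t], ?_, htr, hdet⟩
  intro l hl
  rw [det_sub_smul_one', htr, hdet] at hl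
  exact hdisc ⟨2*l - t, by linear_combination (-4 : ZMod p)*hl⟩

private lemma all_squares {p : ℕ} [Fact p.Prime]
    (h : ∀ e : ZMod p, e ≠ 0 → IsSquare (e*e + 1)) (x : ZMod p) : IsSquare x := by
  have key : ∀ n : ℕ, IsSquare ((n : ZMod p)) := by
    intro n
    induction n with
    | zero => exact ⟨0, by simp⟩
    | succ n ih =>
      by_cases hn : ((n : ℕ) : ZMod p) = 0
      · push_cast
        rw [hn, zero_add]
        exact ⟨1, by ring⟩
      · obtain ⟨e, he⟩ := ih
        have he0 : e ≠ 0 := by rintro rfl; rw [he] at hn; simp at hn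
        push_cast
        rw [he]
        exact h e he0
  have := key x.val
  rwa [ZMod.natCast_val, ZMod.cast_id] at this

private lemma exists_e {p : ℕ} [Fact p.Prime] (h2 : (2 : ZMod p) ≠ 0) :
    ∃ e u : ZMod p, e ≠ 0 ∧ ¬IsSquare u ∧ ¬IsSquare (e*e - u) := by
  have hchar : ringChar (ZMod p) ≠ 2 := by
    rw [ZMod.ringChar_zmod_n]
    intro h; subst h; exact h2 rfl
  obtain ⟨q, hq⟩ := FiniteField.exists_nonsquare (F := ZMod p) hchar
  have hq0 : q ≠ 0 := by rintro rfl; exact hq ⟨0, by ring⟩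
  by_cases hi : IsSquare (-1 : ZMod p)
  · obtain ⟨i, hi⟩ := hi
    have hi0 : i ≠ 0 := by rintro rfl; rw [mul_zero] at hi; exact one_ne_zero (neg_eq_zero.mp hi)
    set a : ZMod p := (1+q)/2 with ha_def
    set b : ZMod p := (1-q)/(2*i) with hb_def
    have ha : a ≠ 0 := by
      intro h
      apply hq
      have : q = -1 := by
        rw [ha_def] at h
        field_simp at h
        linear_combination h
      rw [this]; exact ⟨i, hi⟩
    have hb : b ≠ 0 := by
      intro h
      apply hq
      have : q = 1 := by
        rw [hb_def] at h
        field_simp at h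
        linear_combination -h
      exact ⟨1, by rw [this]; ring⟩
    refine ⟨q, q*(a*a), hq0, ?_, ?_⟩
    · exact nonsq_shift ha hq (by ring)
    · have key : q*q - q*(a*a) = b*b*q := by
        rw [ha_def, hb_def]
        field_simp
        linear_combination (1 - q)^2 * hi
      exact nonsq_shift hb hq key
  · have hkey : ∃ e : ZMod p, e ≠ 0 ∧ ¬IsSquare (e*e + 1) := by
      by_contra hc
      push_neg at hc
      exact hq (all_squares hc q)
    obtain ⟨e, he, hs⟩ := hkey
    exact ⟨e, -1, he, hi, by rwa [sub_neg_eq_add]⟩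

private lemma dec1 : ∀ x : ZMod 2, x*x - 0*x + x = 0 := by decide

private lemma dec2 : ∀ t d : ZMod 3, t ≠ 0 → (∃ x : ZMod 3, d = x*x) → d ≠ 0 →
    ∃ l : ZMod 3, l*l - t*l + d = 0 := by decide

private lemma dec3 : ∀ x : ZMod 2, x = x*x := by decide

private lemma case2mat : ∃ A : Matrix (Fin 2) (Fin 2) (ZMod 2),
    (∀ l : ZMod 2, (A - l • (1 : Matrix (Fin 2) (Fin 2) (ZMod 2))).det ≠ 0) ∧
    A.trace ≠ 0 ∧ A.det ≠ 0 ∧ (∃ b : ZMod 2, A.det = b * b) :=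
  ⟨Matrix.of !![0,1;1,1], by decide, by decide, by decide, ⟨1, by decide⟩⟩

/-- **Lemma 5.4 (three types of anisotropic elements).** Let `p` be a prime and
`F = ZMod p`. Call `A ∈ M(2,F)` anisotropic if `det(A − λI) ≠ 0` for all `λ`.
(i) An anisotropic `A` with `trace A = 0` exists iff `p ≠ 2`;
(ii) an anisotropic `A` with `trace A ≠ 0` and `det A` a quadratic residue exists
iff `p ≠ 3`;
(iii) an anisotropic `A` with `trace A ≠ 0` and `det A` a quadratic nonresidue
exists iff `p ≠ 2`. -/
theorem anisotropic_matrices_of_three_types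
    (p : ℕ) (hp : p.Prime) :
    ((∃ A : Matrix (Fin 2) (Fin 2) (ZMod p),
        (∀ l : ZMod p, (A - l • (1 : Matrix (Fin 2) (Fin 2) (ZMod p))).det ≠ 0) ∧
        A.trace = 0) ↔ p ≠ 2) ∧
    ((∃ A : Matrix (Fin 2) (Fin 2) (ZMod p),
        (∀ l : ZMod p, (A - l • (1 : Matrix (Fin 2) (Fin 2) (ZMod p))).det ≠ 0) ∧
        A.trace ≠ 0 ∧ A.det ≠ 0 ∧ (∃ b : ZMod p, A.det = b * b)) ↔ p ≠ 3) ∧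
    ((∃ A : Matrix (Fin 2) (Fin 2) (ZMod p),
        (∀ l : ZMod p, (A - l • (1 : Matrix (Fin 2) (Fin 2) (ZMod p))).det ≠ 0) ∧
        A.trace ≠ 0 ∧ A.det ≠ 0 ∧ ¬(∃ b : ZMod p, A.det = b * b)) ↔ p ≠ 2) := by
  haveI := Fact.mk hp
  -- basic facts used repeatedly
  have two_ne : p ≠ 2 → (2 : ZMod p) ≠ 0 := by
    intro hp2 h
    have : p ∣ 2 := by
      have := (ZMod.natCast_eq_zero_iff 2 p).mp (by exact_mod_cast h)
      exact this
    exact hp2 ((Nat.prime_dvd_prime_iff_eq hp Nat.prime_two).mp this)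
  have three_ne : p ≠ 3 → (3 : ZMod p) ≠ 0 := by
    intro hp3 h
    have : p ∣ 3 := (ZMod.natCast_eq_zero_iff 3 p).mp (by exact_mod_cast h)
    exact hp3 ((Nat.prime_dvd_prime_iff_eq hp Nat.prime_three).mp this)
  have nonsq : p ≠ 2 → ∃ u : ZMod p, ¬IsSquare u := by
    intro hp2
    refine FiniteField.exists_nonsquare (F := ZMod p) ?_
    rw [ZMod.ringChar_zmod_n]; exact hp2
  refine ⟨⟨?_, ?_⟩, ⟨?_, ?_⟩, ⟨?_, ?_⟩⟩
  -- (i) forward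
  · rintro ⟨A, h1, h2⟩ rfl
    exact h1 A.det (by rw [det_sub_smul_one', h2]; exact dec1 A.det)
  -- (i) backward
  · intro hp2
    obtain ⟨u, hu⟩ := nonsq hp2
    have h2 := two_ne hp2
    obtain ⟨A, hA, htr, _⟩ := builder (p := p) 0 (-u)
      (nonsq_shift h2 hu (by ring))
    exact ⟨A, hA, htr⟩
  -- (ii) forward
  · rintro ⟨A, h1, h2, h3, b, h4⟩ rfl
    obtain ⟨l, hl⟩ := dec2 A.trace A.det h2 ⟨b, h4⟩ h3
    exact h1 l (by rw [det_sub_smul_one']; exact hl)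
  -- (ii) backward
  · intro hp3
    by_cases hp2 : p = 2
    · subst hp2
      exact case2mat
    · obtain ⟨u, hu⟩ := nonsq hp2
      have h2 := two_ne hp2
      have h3 := three_ne hp3
      have h4 : (4 : ZMod p) ≠ 0 := by
        intro h
        apply h2
        have : (2 : ZMod p) * 2 = 0 := by linear_combination h
        exact mul_self_eq_zero.mp this
      have hcex : ∃ c : ZMod p, c ≠ 0 ∧ c*c ≠ -u := by
        by_cases hc1 : (1 : ZMod p)*1 = -u
        · refine ⟨2, h2, fun h => ?_⟩
          exact h3 (by linear_combination h - hc1)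
        · exact ⟨1, one_ne_zero, hc1⟩
      obtain ⟨c, hc0, hcc⟩ := hcex
      set t : ZMod p := (c + u/c)/2 with ht_def
      set b : ZMod p := (u/c - c)/4 with hb_def
      have hdisc : t*t - 4*(b*b) = u := by
        rw [ht_def, hb_def]
        field_simp
        ring
      have ht0 : t ≠ 0 := by
        intro h
        apply hcc
        rw [ht_def] at h
        field_simp at h
        linear_combination h
      have hb0 : b ≠ 0 := by
        intro h
        apply hu
        rw [hb_def] at h
        field_simp at h
        exact ⟨c, by linear_combination h⟩
      obtain ⟨A, hA, htr, hdet⟩ := builder (p := p) t (b*b) (by rw [hdisc]; exact hu)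
      refine ⟨A, hA, ?_, ?_, ⟨b, hdet⟩⟩
      · rw [htr]; exact ht0
      · rw [hdet]; exact mul_ne_zero hb0 hb0
  -- (iii) forward
  · rintro ⟨A, h1, h2, h3, h4⟩ rfl
    exact h4 ⟨A.det, dec3 A.det⟩
  -- (iii) backward
  · intro hp2
    have h2 := two_ne hp2
    obtain ⟨e, u, he, hu, hv⟩ := exists_e h2
    have hd0 : e*e - u ≠ 0 := by
      intro h
      exact hu ⟨e, by linear_combination -h⟩
    obtain ⟨A, hA, htr, hdet⟩ := builder (p := p) (e+e) (e*e - u)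
      (nonsq_shift h2 hu (by ring))
    refine ⟨A, hA, ?_, ?_, ?_⟩
    · rw [htr]
      intro h
      exact he (by
        have : (2 : ZMod p) * e = 0 := by linear_combination h
        rcases mul_eq_zero.mp this with h' | h'
        · exact absurd h' h2
        · exact h')
    · rw [hdet]; exact hd0
    · rintro ⟨x, hx⟩
      rw [hdet] at hx
      exact hv ⟨x, hx⟩
end

section
/- Let p be a prime, F = ZMod p, and A ∈ M(2,F) with det(A − λ·I) ≠ 0 for all λ ∈ F. Let z ∈ F² be a row vector and let C ∈ M(2,F) be invertible with C·A = A·C. Then the map φ on F × F² defined by φ(a,x) = (a, a·z + x·C) (scalar multiple of z plus vector–matrix product x·C) is a bijection and is multiplicative for the Q(A) multiplication: φ((a,x)·(b,y)) = φ(a,x)·φ(b,y) for all (a,x),(b,y), i.e., φ is an automorphism of the loop Q(A). -/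
/-- **Lemma 5.5.** Let `p` be a prime, `F = ZMod p`, and `A ∈ M(2,F)` with
`F·I ⊕ F·A` anisotropic (`det(A − λI) ≠ 0` for all `λ`). Let `Q(A)` be the loop
on `F × F²` with `(a,x)·(b,y) = (a+b, x·U_b + y·U_{−a})`, where `U_b = I + bA`.
For a row vector `z ∈ F²` and an invertible `C ∈ M(2,F)` commuting with `A`, the
map `φ(a,x) = (a, a·z + x·C)` is an automorphism of `Q(A)`. -/
theorem phi_z_C_is_automorphism_of_Q_A
    (p : ℕ) (hp : p.Prime)
    (A : Matrix (Fin 2) (Fin 2) (ZMod p))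
    (hA : ∀ l : ZMod p, (A - l • (1 : Matrix (Fin 2) (Fin 2) (ZMod p))).det ≠ 0)
    (qmul : (ZMod p × (Fin 2 → ZMod p)) → (ZMod p × (Fin 2 → ZMod p)) →
      (ZMod p × (Fin 2 → ZMod p)))
    (hqmul : ∀ (a : ZMod p) (x : Fin 2 → ZMod p) (b : ZMod p) (y : Fin 2 → ZMod p),
      qmul (a, x) (b, y) =
        (a + b, Matrix.vecMul x (1 + b • A) + Matrix.vecMul y (1 + (-a) • A)))
    (z : Fin 2 → ZMod p)
    (C : Matrix (Fin 2) (Fin 2) (ZMod p)) (hC : IsUnit C) (hCA : C * A = A * C)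
    (φ : (ZMod p × (Fin 2 → ZMod p)) → (ZMod p × (Fin 2 → ZMod p)))
    (hφ : ∀ (a : ZMod p) (x : Fin 2 → ZMod p),
      φ (a, x) = (a, a • z + Matrix.vecMul x C)) :
    Function.Bijective φ ∧ ∀ q r, φ (qmul q r) = qmul (φ q) (φ r) := by
  have hdet : IsUnit C.det := (Matrix.isUnit_iff_isUnit_det C).mp hC
  have hCCinv : C * C⁻¹ = 1 := Matrix.mul_nonsing_inv C hdet
  have hCinvC : C⁻¹ * C = 1 := Matrix.nonsing_inv_mul C hdet
  constructor
  · constructor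
    · intro ⟨a, x⟩ ⟨b, y⟩ h
      rw [hφ, hφ] at h
      obtain ⟨h1, h2⟩ := Prod.mk.injEq .. ▸ h
      subst h1
      have h3 : Matrix.vecMul x C = Matrix.vecMul y C := by
        have := add_left_cancel h2
        exact this
      have : Matrix.vecMul (Matrix.vecMul x C) C⁻¹ =
          Matrix.vecMul (Matrix.vecMul y C) C⁻¹ := by rw [h3]
      rw [Matrix.vecMul_vecMul, Matrix.vecMul_vecMul, hCCinv, Matrix.vecMul_one,
        Matrix.vecMul_one] at this
      simp [this]
    · intro ⟨a, x⟩
      refine ⟨(a, Matrix.vecMul (x - a • z) C⁻¹), ?_⟩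
      rw [hφ]
      simp [Matrix.vecMul_vecMul, hCinvC]
  · rintro ⟨a, x⟩ ⟨b, y⟩
    rw [hqmul, hφ, hφ, hφ, hqmul]
    refine Prod.ext rfl ?_
    simp only [Matrix.add_vecMul, Matrix.smul_vecMul, Matrix.vecMul_vecMul]
    have hcomm : ∀ c : ZMod p, C * (1 + c • A) = (1 + c • A) * C := by
      intro c
      simp [Matrix.mul_add, Matrix.add_mul, Matrix.mul_smul, Matrix.smul_mul, hCA]
    rw [hcomm, hcomm, ← Matrix.vecMul_vecMul x, ← Matrix.vecMul_vecMul y]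
    have hz : ∀ c : ZMod p, Matrix.vecMul z (1 + c • A) = z + c • Matrix.vecMul z A := by
      intro c
      ext i
      fin_cases i <;>
        simp [Matrix.vecMul, dotProduct, Fin.sum_univ_two, Matrix.one_apply] <;> ring
    rw [hz, hz]
    module
end

section
/- Let p be a prime, F = ZMod p, and A ∈ M(2,F) with det(A − λ·I) ≠ 0 for all λ ∈ F. Then Q(A) with multiplication (a,x)·(b,y) = (a+b, x·U_b + y·U_{−a}) is an automorphic loop of order p³ and exponent p. Precisely: (0,0) is a two-sided identity; for every q ∈ Q(A) the maps r ↦ q·r and r ↦ r·q are bijections of F × F²; every permutation of F × F² that lies in the subgroup of the symmetric group generated by all left and right translations of Q(A) and fixes (0,0) is multiplicative; and the left powers satisfy (a,x)ⁿ = (n·a, n·x) for all n ≥ 0, so (a,x)ᵖ = (0,0) for every (a,x). -/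
open Matrix

section QAhelp
variable {p : ℕ} (A : Matrix (Fin 2) (Fin 2) (ZMod p))

private lemma QA_hexp (v : Fin 2 → ZMod p) (c : ZMod p) :
    Matrix.vecMul v (1 + c • A) = v + c • Matrix.vecMul v A := by
  rw [Matrix.vecMul_add, Matrix.vecMul_one]
  congr 1
  ext i
  simp [Matrix.vecMul, dotProduct, Finset.mul_sum, mul_comm, mul_left_comm]
  ring

/-- The overgroup of affine permutations `σ (b,y) = (b + a, y·M + b•u + x)` with `M`
commuting with `A`. It contains all translations of `Q(A)`, and its elements fixing
the identity are automorphisms. -/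
private def QA_good : Set (Equiv.Perm (ZMod p × (Fin 2 → ZMod p))) :=
  {σ | ∃ a : ZMod p, ∃ x : Fin 2 → ZMod p, ∃ M : Matrix (Fin 2) (Fin 2) (ZMod p),
    ∃ u : Fin 2 → ZMod p, A * M = M * A ∧
      ∀ b y, σ (b, y) = (b + a, Matrix.vecMul y M + b • u + x)}

private lemma QA_one_mem : (1 : Equiv.Perm (ZMod p × (Fin 2 → ZMod p))) ∈ QA_good A := by
  refine ⟨0, 0, 1, 0, by simp, fun b y => ?_⟩
  simp

private lemma QA_mul_mem {σ τ : Equiv.Perm (ZMod p × (Fin 2 → ZMod p))}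
    (hσ : σ ∈ QA_good A) (hτ : τ ∈ QA_good A) : σ * τ ∈ QA_good A := by
  obtain ⟨a, x, M, u, hM, hσ⟩ := hσ
  obtain ⟨a', x', M', u', hM', hτ⟩ := hτ
  refine ⟨a' + a, Matrix.vecMul x' M + a' • u + x, M' * M, Matrix.vecMul u' M + u, ?_,
    fun b y => ?_⟩
  · rw [← mul_assoc, hM', mul_assoc, hM, mul_assoc]
  · show σ (τ (b, y)) = _
    rw [hτ, hσ]
    ext
    · simp; ring
    · simp [Matrix.add_vecMul, Matrix.smul_vecMul, ← Matrix.vecMul_vecMul, smul_add, add_smul]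
      module

private lemma QA_pow_mem [NeZero p] {σ : Equiv.Perm (ZMod p × (Fin 2 → ZMod p))}
    (hσ : σ ∈ QA_good A) : ∀ n : ℕ, σ ^ n ∈ QA_good A := by
  intro n
  induction n with
  | zero => simpa using QA_one_mem A
  | succ n ih => rw [pow_succ]; exact QA_mul_mem A ih hσ

private lemma QA_inv_mem [NeZero p] {σ : Equiv.Perm (ZMod p × (Fin 2 → ZMod p))}
    (hσ : σ ∈ QA_good A) : σ⁻¹ ∈ QA_good A := by
  have hfin : IsOfFinOrder σ := isOfFinOrder_of_finite σ
  have hpos : 0 < orderOf σ := hfin.orderOf_pos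
  have h1 : σ ^ (orderOf σ - 1) * σ = 1 := by
    rw [← pow_succ, Nat.sub_add_cancel hpos, pow_orderOf_eq_one]
  have h2 : σ⁻¹ = σ ^ (orderOf σ - 1) := by
    rw [eq_comm, eq_inv_iff_mul_eq_one, h1]
  rw [h2]
  exact QA_pow_mem A hσ _

private def QA_subgroup [NeZero p] : Subgroup (Equiv.Perm (ZMod p × (Fin 2 → ZMod p))) where
  carrier := QA_good A
  one_mem' := QA_one_mem A
  mul_mem' := QA_mul_mem A
  inv_mem' := QA_inv_mem A

end QAhelp

/-- **Proposition 5.6, first part.** Let `p` be a prime, `F = ZMod p`, and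
`A ∈ M(2,F)` with `det(A − λI) ≠ 0` for all `λ`. Then `Q(A)`, i.e. `F × F²` with
multiplication `(a,x)·(b,y) = (a+b, x·U_b + y·U_{−a})` where `U_b = I + bA`, is an
automorphic loop of order `p³` and exponent `p`: `(0,0)` is a two-sided identity,
all translations are bijective, every permutation in the group generated by the
translations fixing `(0,0)` is multiplicative, and left powers satisfy
`(a,x)ⁿ = (n·a, n·x)`, so every element has `p`-th power `(0,0)`. -/
theorem Q_A_is_automorphic_loop_of_order_p_cubed_and_exponent_p
    (p : ℕ) (hp : p.Prime)
    (A : Matrix (Fin 2) (Fin 2) (ZMod p))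
    (hA : ∀ l : ZMod p, (A - l • (1 : Matrix (Fin 2) (Fin 2) (ZMod p))).det ≠ 0)
    (qmul : (ZMod p × (Fin 2 → ZMod p)) → (ZMod p × (Fin 2 → ZMod p)) →
      (ZMod p × (Fin 2 → ZMod p)))
    (hqmul : ∀ (a : ZMod p) (x : Fin 2 → ZMod p) (b : ZMod p) (y : Fin 2 → ZMod p),
      qmul (a, x) (b, y) =
        (a + b, Matrix.vecMul x (1 + b • A) + Matrix.vecMul y (1 + (-a) • A)))
    (pow : (ZMod p × (Fin 2 → ZMod p)) → ℕ → (ZMod p × (Fin 2 → ZMod p)))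
    (hpow0 : ∀ q, pow q 0 = (0, 0))
    (hpows : ∀ q n, pow q (n + 1) = qmul q (pow q n)) :
    (∀ q, qmul (0, 0) q = q) ∧
    (∀ q, qmul q (0, 0) = q) ∧
    (∀ q, Function.Bijective (fun r => qmul q r)) ∧
    (∀ q, Function.Bijective (fun r => qmul r q)) ∧
    Nat.card (ZMod p × (Fin 2 → ZMod p)) = p ^ 3 ∧
    (∀ σ ∈ Subgroup.closure
        {σ : Equiv.Perm (ZMod p × (Fin 2 → ZMod p)) |
          (∃ q, ∀ r, σ r = qmul q r) ∨ (∃ q, ∀ r, σ r = qmul r q)},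
      σ (0, 0) = (0, 0) → ∀ u v, σ (qmul u v) = qmul (σ u) (σ v)) ∧
    (∀ (a : ZMod p) (x : Fin 2 → ZMod p) (n : ℕ),
      pow (a, x) n = ((n : ZMod p) * a, (n : ZMod p) • x)) ∧
    (∀ q, pow q p = (0, 0)) := by
  haveI : NeZero p := ⟨hp.pos.ne'⟩
  haveI := Fact.mk hp
  have hdet : ∀ b : ZMod p, IsUnit (1 + b • A).det := by
    intro b
    rcases eq_or_ne b 0 with rfl | hb
    · simp
    · have h1 : (1 : Matrix (Fin 2) (Fin 2) (ZMod p)) + b • A = b • (A - (-b⁻¹) • 1) := by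
        rw [smul_sub, smul_smul, mul_neg, mul_inv_cancel₀ hb, neg_smul, one_smul,
          sub_neg_eq_add, add_comm]
      rw [h1, Matrix.det_smul]
      exact (mul_ne_zero (pow_ne_zero _ hb) (hA _)).isUnit
  have hpowform : ∀ (a : ZMod p) (x : Fin 2 → ZMod p) (n : ℕ),
      pow (a, x) n = ((n : ZMod p) * a, (n : ZMod p) • x) := by
    intro a x n
    induction n with
    | zero => rw [hpow0]; simp
    | succ n ih =>
      rw [hpows, ih, hqmul]
      refine Prod.ext ?_ ?_
      · show a + (n : ZMod p) * a = ((n + 1 : ℕ) : ZMod p) * a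
        push_cast
        ring
      · show Matrix.vecMul x (1 + ((n : ZMod p) * a) • A) +
          Matrix.vecMul ((n : ZMod p) • x) (1 + (-a) • A) = ((n + 1 : ℕ) : ZMod p) • x
        push_cast
        rw [QA_hexp, Matrix.smul_vecMul, QA_hexp]
        module
  refine ⟨?_, ?_, ?_, ?_, ?_, ?_, hpowform, ?_⟩
  · rintro ⟨b, y⟩
    rw [hqmul]
    simp
  · rintro ⟨a, x⟩
    rw [hqmul]
    simp
  · rintro ⟨a, x⟩
    set V := (1 + (-a) • A)⁻¹ with hVdef
    have hV1 : (1 + (-a) • A) * V = 1 := Matrix.mul_nonsing_inv _ (hdet _)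
    have hV2 : V * (1 + (-a) • A) = 1 := Matrix.nonsing_inv_mul _ (hdet _)
    refine Function.bijective_iff_has_inverse.mpr
      ⟨fun cz => (cz.1 - a, Matrix.vecMul (cz.2 - Matrix.vecMul x (1 + (cz.1 - a) • A)) V),
       ?_, ?_⟩
    · rintro ⟨b, y⟩
      dsimp only
      rw [hqmul]
      have h1 : a + b - a = b := by ring
      simp only [h1]
      refine Prod.ext rfl ?_
      simp only [add_sub_cancel_left, Matrix.vecMul_vecMul, hV1, Matrix.vecMul_one]
    · rintro ⟨c, z⟩
      simp only []
      rw [hqmul]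
      refine Prod.ext (by ring) ?_
      simp only [Matrix.vecMul_vecMul, hV2, Matrix.vecMul_one, add_sub_cancel]
  · rintro ⟨a, x⟩
    set W := (1 + a • A)⁻¹ with hWdef
    have hW1 : (1 + a • A) * W = 1 := Matrix.mul_nonsing_inv _ (hdet _)
    have hW2 : W * (1 + a • A) = 1 := Matrix.nonsing_inv_mul _ (hdet _)
    refine Function.bijective_iff_has_inverse.mpr
      ⟨fun cz => (cz.1 - a, Matrix.vecMul (cz.2 - Matrix.vecMul x (1 + (-(cz.1 - a)) • A)) W),
       ?_, ?_⟩
    · rintro ⟨b, y⟩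
      dsimp only
      rw [hqmul]
      have h1 : b + a - a = b := by ring
      simp only [h1]
      refine Prod.ext rfl ?_
      simp only [add_sub_cancel_right, Matrix.vecMul_vecMul]
      rw [hW1, Matrix.vecMul_one]
    · rintro ⟨c, z⟩
      simp only []
      rw [hqmul]
      refine Prod.ext (by ring) ?_
      rw [Matrix.vecMul_vecMul, hW2, Matrix.vecMul_one]
      ring_nf
  · rw [Nat.card_prod, Nat.card_fun, Nat.card_zmod, Nat.card_eq_fintype_card,
      Fintype.card_fin]
    ring
  · intro σ hσ hfix
    have hgen : {σ : Equiv.Perm (ZMod p × (Fin 2 → ZMod p)) |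
        (∃ q, ∀ r, σ r = qmul q r) ∨ (∃ q, ∀ r, σ r = qmul r q)} ⊆ (QA_subgroup A : Set _) := by
      rintro τ (⟨⟨a, x⟩, hq⟩ | ⟨⟨a, x⟩, hq⟩)
      · refine ⟨a, x, 1 + (-a) • A, Matrix.vecMul x A, ?_, fun b y => ?_⟩
        · simp [mul_add, add_mul, Matrix.mul_smul, Matrix.smul_mul]
        · rw [hq (b, y), hqmul]
          refine Prod.ext (by simp [add_comm]) ?_
          simp only [QA_hexp]
          module
      · refine ⟨a, x, 1 + a • A, -(Matrix.vecMul x A), ?_, fun b y => ?_⟩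
        · simp [mul_add, add_mul, Matrix.mul_smul, Matrix.smul_mul]
        · rw [hq (b, y), hqmul]
          refine Prod.ext rfl ?_
          simp only [QA_hexp]
          module
    have hσ' : σ ∈ QA_subgroup A := (Subgroup.closure_le _).mpr hgen hσ
    obtain ⟨a, x, M, u, hM, hform⟩ := hσ'
    have h0 : (a, x) = ((0 : ZMod p), (0 : Fin 2 → ZMod p)) := by
      rw [← hfix, hform 0 0]
      simp
    obtain ⟨rfl, rfl⟩ : a = 0 ∧ x = 0 := by
      simpa [Prod.ext_iff] using h0
    have hMA : ∀ v : Fin 2 → ZMod p,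
        Matrix.vecMul (Matrix.vecMul v A) M = Matrix.vecMul (Matrix.vecMul v M) A := by
      intro v
      rw [Matrix.vecMul_vecMul, Matrix.vecMul_vecMul, hM]
    rintro ⟨a, x⟩ ⟨b, y⟩
    rw [hqmul, hform, hform, hform, hqmul]
    refine Prod.ext (by simp) ?_
    simp only [QA_hexp, Matrix.add_vecMul, Matrix.smul_vecMul, smul_add, add_zero]
    simp only [hMA]
    module
  · rintro ⟨a, x⟩
    rw [hpowform a x p]
    simp
end

section
/- Let p be a prime, F = ZMod p, and A ∈ M(2,F) with det(A − λ·I) ≠ 0 for all λ ∈ F; let Q = Q(A) with multiplication (a,x)·(b,y) = (a+b, x·U_b + y·U_{−a}). Then: (1) the middle nucleus is N_μ(Q) = {(0,x) : x ∈ F²}, i.e., (u·(a,x))·w = u·((a,x)·w) holds for all u,w ∈ Q if and only if a = 0; (2) the left and right nuclei are trivial, i.e., ((a,x)·u)·w = (a,x)·(u·w) for all u,w ∈ Q if and only if (a,x) = (0,0), and likewise (u·w)·(a,x) = u·(w·(a,x)) for all u,w if and only if (a,x) = (0,0); (3) if p = 2 then Q is commutative, while if p > 2 then the commutant is trivial: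 (a,x)·u = u·(a,x) for all u ∈ Q if and only if (a,x) = (0,0). In particular the nucleus and center of Q are trivial, so Q is not centrally nilpotent. -/
open Matrix

private lemma QA_vecMul_smulM {p : ℕ} (A : Matrix (Fin 2) (Fin 2) (ZMod p))
    (b : ZMod p) (x : Fin 2 → ZMod p) :
    Matrix.vecMul x (b • A) = b • Matrix.vecMul x A := by
  ext j
  simp [Matrix.vecMul, dotProduct, Finset.mul_sum]
  ring

private lemma QA_expand {p : ℕ} (A : Matrix (Fin 2) (Fin 2) (ZMod p))
    (b : ZMod p) (x : Fin 2 → ZMod p) :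
    Matrix.vecMul x (1 + b • A) = x + b • Matrix.vecMul x A := by
  rw [Matrix.vecMul_add, Matrix.vecMul_one, QA_vecMul_smulM]

/-- **Proposition 5.6, second part.** Let `p` be a prime, `F = ZMod p`, and
`A ∈ M(2,F)` with `det(A − λI) ≠ 0` for all `λ`; let `Q = Q(A)` be `F × F²` with
`(a,x)·(b,y) = (a+b, x·U_b + y·U_{−a})`, `U_b = I + bA`. Then:
(1) the middle nucleus is `{(0,x) : x ∈ F²}`;
(2) the left and right nuclei are trivial;
(3) if `p = 2` then `Q` is commutative, while if `p > 2` the commutant is trivial.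
In particular `N(Q) = Z(Q) = 1`, so `Q` is not centrally nilpotent. -/
theorem Q_A_nuclei_and_commutant
    (p : ℕ) (hp : p.Prime)
    (A : Matrix (Fin 2) (Fin 2) (ZMod p))
    (hA : ∀ l : ZMod p, (A - l • (1 : Matrix (Fin 2) (Fin 2) (ZMod p))).det ≠ 0)
    (qmul : (ZMod p × (Fin 2 → ZMod p)) → (ZMod p × (Fin 2 → ZMod p)) →
      (ZMod p × (Fin 2 → ZMod p)))
    (hqmul : ∀ (a : ZMod p) (x : Fin 2 → ZMod p) (b : ZMod p) (y : Fin 2 → ZMod p),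
      qmul (a, x) (b, y) =
        (a + b, Matrix.vecMul x (1 + b • A) + Matrix.vecMul y (1 + (-a) • A))) :
    (∀ (a : ZMod p) (x : Fin 2 → ZMod p),
      (∀ u w, qmul (qmul u (a, x)) w = qmul u (qmul (a, x) w)) ↔ a = 0) ∧
    (∀ (a : ZMod p) (x : Fin 2 → ZMod p),
      (∀ u w, qmul (qmul (a, x) u) w = qmul (a, x) (qmul u w)) ↔ (a = 0 ∧ x = 0)) ∧
    (∀ (a : ZMod p) (x : Fin 2 → ZMod p),
      (∀ u w, qmul (qmul u w) (a, x) = qmul u (qmul w (a, x))) ↔ (a = 0 ∧ x = 0)) ∧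
    (p = 2 → ∀ u v, qmul u v = qmul v u) ∧
    (2 < p → ∀ (a : ZMod p) (x : Fin 2 → ZMod p),
      (∀ u, qmul (a, x) u = qmul u (a, x)) ↔ (a = 0 ∧ x = 0)) := by
  haveI : Fact p.Prime := ⟨hp⟩
  -- A is invertible
  have hdet : A.det ≠ 0 := by simpa using hA 0
  have hAinv : A * A⁻¹ = 1 := Matrix.mul_nonsing_inv A (isUnit_iff_ne_zero.2 hdet)
  have hinj : ∀ v : Fin 2 → ZMod p, Matrix.vecMul v A = 0 → v = 0 := by
    intro v hv
    calc v = Matrix.vecMul v 1 := (Matrix.vecMul_one v).symm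
      _ = Matrix.vecMul (Matrix.vecMul v A) A⁻¹ := by
          rw [Matrix.vecMul_vecMul, hAinv]
      _ = 0 := by rw [hv]; simp
  -- a fixed vector with nonzero image
  set e : Fin 2 → ZMod p := Pi.single 0 1 with he
  have he0 : e ≠ 0 := by
    intro h
    have := congrFun h 0
    simp [he] at this
  have hinj2 : ∀ v : Fin 2 → ZMod p,
      Matrix.vecMul (Matrix.vecMul v A) A = 0 → v = 0 := fun v hv =>
    hinj v (hinj _ hv)
  have heA2 : Matrix.vecMul (Matrix.vecMul e A) A ≠ 0 := fun h => he0 (hinj2 e h)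
  -- scalar extraction
  have hscal : ∀ (c : ZMod p) (v : Fin 2 → ZMod p), v ≠ 0 → c • v = 0 → c = 0 := by
    intro c v hv hcv
    obtain ⟨i, hi⟩ := Function.ne_iff.1 hv
    have := congrFun hcv i
    simp at this
    rcases this with h | h
    · exact h
    · exact absurd h hi
  refine ⟨?_, ?_, ?_, ?_, ?_⟩
  · -- middle nucleus
    intro a x
    constructor
    · intro h
      have h1 := h (0, e) (1, 0)
      simp only [hqmul, QA_expand, Matrix.add_vecMul, Matrix.smul_vecMul, Matrix.zero_vecMul,
        Matrix.vecMul_one, zero_smul, smul_zero, neg_zero, add_zero, zero_add, Prod.mk.injEq] at h1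
      have h2 := h1.2
      have key : a • Matrix.vecMul (Matrix.vecMul e A) A = 0 := by
        linear_combination (norm := module) h2
      exact hscal a _ heA2 key
    · rintro rfl u w
      obtain ⟨b, y⟩ := u; obtain ⟨c, z⟩ := w
      simp only [hqmul, QA_expand, Matrix.add_vecMul, Matrix.smul_vecMul, Matrix.zero_vecMul,
        Matrix.vecMul_one, zero_smul, smul_zero, neg_zero, add_zero, zero_add, Prod.mk.injEq]
      all_goals refine ⟨by trivial, ?_⟩
      all_goals module
  · -- left nucleus
    intro a x
    constructor
    · intro h
      have hx : x = 0 := by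
        have h1 := h (1, 0) (1, 0)
        simp only [hqmul, QA_expand, Matrix.add_vecMul, Matrix.smul_vecMul, Matrix.zero_vecMul,
        Matrix.vecMul_one, zero_smul, smul_zero, neg_zero, add_zero, zero_add, Prod.mk.injEq] at h1
        have key : Matrix.vecMul (Matrix.vecMul x A) A = 0 := by
          linear_combination (norm := module) h1.2
        exact hinj2 x key
      have ha : a = 0 := by
        have h1 := h (1, 0) (0, e)
        -- LHS - RHS = -a e''
        simp only [hqmul, QA_expand, Matrix.add_vecMul, Matrix.smul_vecMul, Matrix.zero_vecMul,
        Matrix.vecMul_one, zero_smul, smul_zero, neg_zero, add_zero, zero_add, Prod.mk.injEq] at h1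
        have key : a • Matrix.vecMul (Matrix.vecMul e A) A = 0 := by
          linear_combination (norm := module) -h1.2
        exact hscal a _ heA2 key
      exact ⟨ha, hx⟩
    · rintro ⟨rfl, rfl⟩ u w
      obtain ⟨b, y⟩ := u; obtain ⟨c, z⟩ := w
      simp only [hqmul, QA_expand, Matrix.add_vecMul, Matrix.smul_vecMul, Matrix.zero_vecMul,
        Matrix.vecMul_one, zero_smul, smul_zero, neg_zero, add_zero, zero_add, Prod.mk.injEq]
      all_goals refine ⟨by ring, ?_⟩
      all_goals module
  · -- right nucleus
    intro a x
    constructor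
    · intro h
      have ha : a = 0 := by
        have h1 := h (0, e) (1, 0)
        simp only [hqmul, QA_expand, Matrix.add_vecMul, Matrix.smul_vecMul, Matrix.zero_vecMul,
        Matrix.vecMul_one, zero_smul, smul_zero, neg_zero, add_zero, zero_add, Prod.mk.injEq] at h1
        have key : a • Matrix.vecMul (Matrix.vecMul e A) A = 0 := by
          linear_combination (norm := module) h1.2
        exact hscal a _ heA2 key
      have hx : x = 0 := by
        have h1 := h (1, 0) (1, 0)
        simp only [hqmul, QA_expand, Matrix.add_vecMul, Matrix.smul_vecMul, Matrix.zero_vecMul,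
        Matrix.vecMul_one, zero_smul, smul_zero, neg_zero, add_zero, zero_add, Prod.mk.injEq] at h1
        have key : Matrix.vecMul (Matrix.vecMul x A) A = 0 := by
          linear_combination (norm := module) -h1.2
        exact hinj2 x key
      exact ⟨ha, hx⟩
    · rintro ⟨rfl, rfl⟩ u w
      obtain ⟨b, y⟩ := u; obtain ⟨c, z⟩ := w
      simp only [hqmul, QA_expand, Matrix.add_vecMul, Matrix.smul_vecMul, Matrix.zero_vecMul,
        Matrix.vecMul_one, zero_smul, smul_zero, neg_zero, add_zero, zero_add, Prod.mk.injEq]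
      all_goals refine ⟨by ring, ?_⟩
      all_goals module
  · -- p = 2 : commutative
    rintro rfl u v
    obtain ⟨a, x⟩ := u; obtain ⟨b, y⟩ := v
    have hneg : ∀ t : ZMod 2, -t = t := fun t => CharTwo.neg_eq t
    simp only [hqmul, QA_expand, hneg, Matrix.add_vecMul, Matrix.vecMul_smul, Matrix.zero_vecMul,
        Matrix.vecMul_one, zero_smul, smul_zero, neg_zero, add_zero, zero_add, Prod.mk.injEq]
    refine ⟨by ring, ?_⟩
    abel
  · -- p > 2 : trivial commutant
    intro hp2 a x
    have h2ne : (2 : ZMod p) ≠ 0 := by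
      have : ((2 : ℕ) : ZMod p) ≠ 0 := by
        rw [Ne, ZMod.natCast_eq_zero_iff]
        exact fun hd => absurd (Nat.le_of_dvd (by norm_num) hd) (not_le.2 hp2)
      simpa using this
    constructor
    · intro h
      have hx : x = 0 := by
        have h1 := h (1, 0)
        simp only [hqmul, QA_expand, Matrix.add_vecMul, Matrix.smul_vecMul, Matrix.zero_vecMul,
        Matrix.vecMul_one, zero_smul, smul_zero, neg_zero, add_zero, zero_add, Prod.mk.injEq] at h1
        have key : (2 : ZMod p) • Matrix.vecMul x A = 0 := by
          linear_combination (norm := module) h1.2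
        have : Matrix.vecMul x A = 0 := by
          funext i
          have := congrFun key i
          simp at this
          rcases this with h' | h'
          · exact absurd h' h2ne
          · exact h'
        exact hinj x this
      have ha : a = 0 := by
        have h1 := h (0, e)
        simp only [hqmul, QA_expand, Matrix.add_vecMul, Matrix.smul_vecMul, Matrix.zero_vecMul,
        Matrix.vecMul_one, zero_smul, smul_zero, neg_zero, add_zero, zero_add, Prod.mk.injEq] at h1
        have key : (2 * a) • Matrix.vecMul e A = 0 := by
          linear_combination (norm := module) -h1.2
        have heA : Matrix.vecMul e A ≠ 0 := fun hh => he0 (hinj e hh)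
        have h2a := hscal _ _ heA key
        rcases mul_eq_zero.1 h2a with h' | h'
        · exact absurd h' h2ne
        · exact h'
      exact ⟨ha, hx⟩
    · rintro ⟨rfl, rfl⟩ u
      obtain ⟨b, y⟩ := u
      simp only [hqmul, QA_expand, Matrix.add_vecMul, Matrix.smul_vecMul, Matrix.zero_vecMul,
        Matrix.vecMul_one, zero_smul, smul_zero, neg_zero, add_zero, zero_add, Prod.mk.injEq]
      all_goals refine ⟨by ring, ?_⟩
      all_goals module
end

section
/- Let p be a prime, F = ZMod p, and A ∈ M(2,F). Suppose I + a·A is invertible for every a ∈ F, but the plane F·I ⊕ F·A is not anisotropic, i.e., det(A − λ·I) = 0 for some λ ∈ F. Then det(A) = 0, trace(A) = 0, and A² = 0. Moreover, whenever A ∈ M(2,F) satisfies A² = 0, the operation (a,x)·(b,y) = (a+b, x·U_b + y·U_{−a}) on F × F² (with U_b = I + b·A) is associative, so Q(A) is a group. -/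
/-- **Remark 5.8.** Let `p` be a prime, `F = ZMod p`, and `A ∈ M(2,F)` such that
`I + aA` is invertible for every `a ∈ F` but `F·I ⊕ F·A` is not anisotropic
(i.e. `det(A − λI) = 0` for some `λ`). Then `det A = 0`, `trace A = 0` and
`A² = 0`. Moreover, for any `B ∈ M(2,F)` with `B² = 0` the operation
`(a,x)·(b,y) = (a+b, x·U_b + y·U_{−a})` (with `U_b = I + bB`) on `F × F²` is
associative, so `Q(B)` is a group. -/
theorem not_anisotropic_implies_square_zero_and_group
    (p : ℕ) (hp : p.Prime)
    (A : Matrix (Fin 2) (Fin 2) (ZMod p))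
    (hU : ∀ a : ZMod p, IsUnit (1 + a • A))
    (hiso : ∃ l : ZMod p, (A - l • (1 : Matrix (Fin 2) (Fin 2) (ZMod p))).det = 0)
    (qmul : Matrix (Fin 2) (Fin 2) (ZMod p) → (ZMod p × (Fin 2 → ZMod p)) →
      (ZMod p × (Fin 2 → ZMod p)) → (ZMod p × (Fin 2 → ZMod p)))
    (hqmul : ∀ (B : Matrix (Fin 2) (Fin 2) (ZMod p)) (a : ZMod p)
        (x : Fin 2 → ZMod p) (b : ZMod p) (y : Fin 2 → ZMod p),
      qmul B (a, x) (b, y) =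
        (a + b, Matrix.vecMul x (1 + b • B) + Matrix.vecMul y (1 + (-a) • B))) :
    A.det = 0 ∧ A.trace = 0 ∧ A * A = 0 ∧
    (∀ B : Matrix (Fin 2) (Fin 2) (ZMod p), B * B = 0 →
      ∀ q r s : ZMod p × (Fin 2 → ZMod p),
        qmul B (qmul B q r) s = qmul B q (qmul B r s)) := by
  haveI : Fact p.Prime := ⟨hp⟩
  -- key: any eigenvalue must be 0
  have key : ∀ l : ZMod p, (A - l • (1 : Matrix (Fin 2) (Fin 2) (ZMod p))).det = 0 → l = 0 := by
    intro l hl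
    by_contra hl0
    have h1 : (1 : Matrix (Fin 2) (Fin 2) (ZMod p)) + (-l⁻¹) • A
        = (-l⁻¹) • (A - l • (1 : Matrix (Fin 2) (Fin 2) (ZMod p))) := by
      rw [smul_sub, smul_smul]
      rw [neg_mul, inv_mul_cancel₀ hl0, neg_one_smul, sub_neg_eq_add]
      abel
    have hu := hU (-l⁻¹)
    rw [Matrix.isUnit_iff_isUnit_det, h1, Matrix.det_smul, hl, mul_zero] at hu
    exact hu.ne_zero rfl
  obtain ⟨l, hl⟩ := hiso
  have hl0 := key l hl
  subst hl0
  have hdet : A.det = 0 := by simpa using hl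
  have htr : A.trace = 0 := by
    apply key
    rw [Matrix.det_fin_two] at hdet ⊢
    rw [Matrix.trace_fin_two]
    simp only [Matrix.sub_apply, Matrix.smul_apply, Matrix.one_apply, smul_eq_mul]
    simp only [Fin.zero_eq_one_iff, Fin.one_eq_zero_iff, if_true, if_false, mul_one, mul_zero,
      OfNat.ofNat_ne_one, (by decide : (1 : Fin 2) ≠ 0), (by decide : (0 : Fin 2) ≠ 1),
      if_neg, sub_zero]
    linear_combination hdet
  have hsq : A * A = 0 := by
    rw [Matrix.det_fin_two] at hdet
    rw [Matrix.trace_fin_two] at htr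
    ext i j
    fin_cases i <;> fin_cases j <;>
      simp only [Matrix.mul_apply, Fin.sum_univ_two, Matrix.zero_apply, Fin.mk_zero, Fin.mk_one,
        Fin.isValue]
    · linear_combination A 0 0 * htr - hdet
    · linear_combination A 0 1 * htr
    · linear_combination A 1 0 * htr
    · linear_combination A 1 1 * htr - hdet
  refine ⟨hdet, htr, hsq, ?_⟩
  intro B hB ⟨a, x⟩ ⟨b, y⟩ ⟨c, z⟩
  have hUm : ∀ u v : ZMod p, (1 + u • B) * (1 + v • B) = 1 + (u + v) • B := by
    intro u v
    rw [add_mul, one_mul, mul_add, mul_one, smul_mul_smul_comm, hB, smul_zero, add_zero,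
      add_smul]
    abel
  simp only [hqmul, Prod.mk.injEq]
  refine ⟨by ring, ?_⟩
  simp only [Matrix.add_vecMul, Matrix.vecMul_vecMul, hUm]
  rw [show (-a) + c = c + -a from add_comm _ _, show -(a + b) = -b + (-a : ZMod p) by ring]
  abel
end
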